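/- arXiv:2509.22235 — 4 statements merged into one kernel-verified Lean document; each statement's English description precedes it below -/
import Mathlib

section
/- Let Γ̂ be a symmetric q×q matrix, γ̂ ∈ ℝ^q, and β* ∈ ℝ^q with support S of size s. Suppose (i) |γ̂ − Γ̂ β*|_∞ ≤ λ/4 for some λ > 0, and (ii) the restricted eigenvalue condition vᵀ Γ̂ v ≥ κ |v|₂² holds for all v with |v_{S^c}|₁ ≤ 3|v_S|₁, where κ > 0. Then any minimizer β̂ of β ↦ βᵀ Γ̂ β − 2 βᵀ γ̂ + λ|β|₁ satisfies |β̂ − β*|₂ ≤ 8λ√s/κ and |β̂ − β*|₁ ≤ 32 λ s / κ. -/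
/-!
Comparing the Lasso objective at `β̂` and `β*`, the deviation bound absorbs the linear noise term
and the `ℓ¹` penalty splits over `S` and `Sᶜ`, so that `v = β̂ - β*` satisfies
`vᵀ Γ̂ v ≤ λ/2 (3 |v_S|₁ - |v_{Sᶜ}|₁)`. Positive semidefiniteness puts `v` in the cone
`|v_{Sᶜ}|₁ ≤ 3 |v_S|₁`, where the restricted eigenvalue condition and Cauchy–Schwarz
`|v_S|₁ ≤ √s |v|₂` give `κ |v|₂² ≤ (3λ/2) √s |v|₂`. Hence `|v|₂ ≤ 3λ√s / (2κ)` and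
`|v|₁ ≤ 4 |v_S|₁ ≤ 6λs/κ`.
-/

open Matrix Finset

section QuadraticForm

variable {n R : Type*} [Fintype n]

theorem Matrix.IsSymm.dotProduct_mulVec_comm [CommSemiring R] {A : Matrix n n R} (hA : A.IsSymm)
    (x y : n → R) : x ⬝ᵥ A *ᵥ y = y ⬝ᵥ A *ᵥ x := by
  rw [dotProduct_mulVec, ← mulVec_transpose, hA, dotProduct_comm]

theorem Matrix.IsSymm.dotProduct_mulVec_sub_sub [CommRing R] {A : Matrix n n R} (hA : A.IsSymm)
    (x y : n → R) :
    (x - y) ⬝ᵥ A *ᵥ (x - y) = x ⬝ᵥ A *ᵥ x - 2 * (x ⬝ᵥ A *ᵥ y) + y ⬝ᵥ A *ᵥ y := by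
  simp only [mulVec_sub, sub_dotProduct, dotProduct_sub, hA.dotProduct_mulVec_comm y x]
  ring

end QuadraticForm

section L1

variable {n : Type*} [Fintype n]

theorem dotProduct_le_mul_sum_abs {v w : n → ℝ} {c : ℝ} (hw : ∀ i, |w i| ≤ c) :
    v ⬝ᵥ w ≤ c * ∑ i, |v i| := by
  rw [dotProduct, mul_sum]
  refine sum_le_sum fun i _ => ?_
  calc v i * w i ≤ |v i| * |w i| := (le_abs_self _).trans (abs_mul _ _).le
    _ ≤ c * |v i| := by rw [mul_comm]; exact mul_le_mul_of_nonneg_right (hw i) (abs_nonneg _)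

theorem sum_abs_sub_sum_abs_le_of_support_subset [DecidableEq n] {x y : n → ℝ} {S : Finset n}
    (hx : ∀ i ∉ S, x i = 0) :
    ∑ i, |x i| - ∑ i, |y i| ≤ ∑ i ∈ S, |y i - x i| - ∑ i ∈ Sᶜ, |y i - x i| := by
  have hon : ∑ i ∈ S, |x i| - ∑ i ∈ S, |y i| ≤ ∑ i ∈ S, |y i - x i| := by
    rw [← sum_sub_distrib]
    exact sum_le_sum fun i _ => (abs_sub_abs_le_abs_sub _ _).trans_eq (abs_sub_comm _ _)
  have hx_off : ∑ i ∈ Sᶜ, |x i| = 0 :=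
    sum_eq_zero fun i hi => by rw [hx i (mem_compl.1 hi), abs_zero]
  have hy_off : ∑ i ∈ Sᶜ, |y i - x i| = ∑ i ∈ Sᶜ, |y i| :=
    sum_congr rfl fun i hi => by rw [hx i (mem_compl.1 hi), sub_zero]
  rw [← sum_add_sum_compl S (fun i => |x i|), ← sum_add_sum_compl S (fun i => |y i|)]
  linarith

theorem sum_abs_le_sqrt_card_mul_sqrt_sum_sq (S : Finset n) (v : n → ℝ) :
    ∑ i ∈ S, |v i| ≤ √(#S : ℝ) * √(∑ i, v i ^ 2) := by
  rw [← Real.sqrt_mul (Nat.cast_nonneg _)]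
  refine Real.le_sqrt_of_sq_le ((sq_sum_le_card_mul_sum_sq (s := S) (f := fun i => |v i|)).trans ?_)
  simp only [sq_abs]
  exact mul_le_mul_of_nonneg_left
    (sum_le_sum_of_subset_of_nonneg (subset_univ S) fun i _ _ => sq_nonneg (v i))
    (Nat.cast_nonneg _)

end L1

theorem Real.sqrt_le_div_of_mul_le_mul_sqrt {κ c T : ℝ} (hκ : 0 < κ) (hc : 0 ≤ c) (hT : 0 ≤ T)
    (h : κ * T ≤ c * √T) : √T ≤ c / κ := by
  rw [le_div_iff₀ hκ]
  rcases (Real.sqrt_nonneg T).eq_or_lt with h0 | hpos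
  · rw [← h0, zero_mul]; exact hc
  · have h' : κ * √T * √T ≤ c * √T := by rwa [mul_assoc, Real.mul_self_sqrt hT]
    linarith [le_of_mul_le_mul_right h' hpos]

section Lasso

variable {n : Type*} [Fintype n] {Γ : Matrix n n ℝ} {γ β₀ β : n → ℝ} {lam : ℝ}

theorem lasso_basic_inequality (hΓ : Γ.IsSymm)
    (hmin : β ⬝ᵥ Γ *ᵥ β - 2 * (β ⬝ᵥ γ) + lam * ∑ i, |β i| ≤
      β₀ ⬝ᵥ Γ *ᵥ β₀ - 2 * (β₀ ⬝ᵥ γ) + lam * ∑ i, |β₀ i|) :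
    (β - β₀) ⬝ᵥ Γ *ᵥ (β - β₀) ≤
      2 * ((β - β₀) ⬝ᵥ (γ - Γ *ᵥ β₀)) + lam * (∑ i, |β₀ i| - ∑ i, |β i|) := by
  rw [hΓ.dotProduct_mulVec_sub_sub]
  simp only [sub_dotProduct, dotProduct_sub]
  linarith

theorem lasso_quadForm_le_cone [DecidableEq n] {S : Finset n} (hΓ : Γ.IsSymm) (hlam : 0 ≤ lam)
    (hdev : ∀ i, |γ i - (Γ *ᵥ β₀) i| ≤ lam / 4) (hβ₀ : ∀ i ∉ S, β₀ i = 0)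
    (hmin : β ⬝ᵥ Γ *ᵥ β - 2 * (β ⬝ᵥ γ) + lam * ∑ i, |β i| ≤
      β₀ ⬝ᵥ Γ *ᵥ β₀ - 2 * (β₀ ⬝ᵥ γ) + lam * ∑ i, |β₀ i|) :
    (β - β₀) ⬝ᵥ Γ *ᵥ (β - β₀) ≤
      lam / 2 * (3 * ∑ i ∈ S, |β i - β₀ i| - ∑ i ∈ Sᶜ, |β i - β₀ i|) := by
  have hbasic := lasso_basic_inequality hΓ hmin
  have hnoise : (β - β₀) ⬝ᵥ (γ - Γ *ᵥ β₀) ≤ lam / 4 * ∑ i, |β i - β₀ i| :=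
    dotProduct_le_mul_sum_abs hdev
  have hpenalty :=
    mul_le_mul_of_nonneg_left (sum_abs_sub_sum_abs_le_of_support_subset (y := β) hβ₀) hlam
  rw [← sum_add_sum_compl S] at hnoise
  linarith

end Lasso

/-- Lasso estimation error bounds under a deviation bound and a restricted
eigenvalue condition. -/
theorem lasso_error_bounds {q : ℕ} (Γhat : Matrix (Fin q) (Fin q) ℝ)
    (hsym : Γhat.IsSymm) (hpsd : Γhat.PosSemidef)
    (γhat βstar : Fin q → ℝ) (lam κ : ℝ) (hlam : 0 < lam) (hκ : 0 < κ)
    (S : Finset (Fin q)) (hS : ∀ i, i ∈ S ↔ βstar i ≠ 0)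
    (s : ℕ) (hs : S.card = s)
    (hdev : ∀ i, |γhat i - Γhat.mulVec βstar i| ≤ lam / 4)
    (hRE : ∀ v : Fin q → ℝ, (∑ i ∈ Sᶜ, |v i|) ≤ 3 * ∑ i ∈ S, |v i| →
      v ⬝ᵥ Γhat.mulVec v ≥ κ * ∑ i, (v i) ^ 2)
    (βhat : Fin q → ℝ)
    (hmin : ∀ β : Fin q → ℝ,
      βhat ⬝ᵥ Γhat.mulVec βhat - 2 * (βhat ⬝ᵥ γhat) + lam * ∑ i, |βhat i| ≤
        β ⬝ᵥ Γhat.mulVec β - 2 * (β ⬝ᵥ γhat) + lam * ∑ i, |β i|) :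
    Real.sqrt (∑ i, (βhat i - βstar i) ^ 2) ≤ 8 * lam * Real.sqrt s / κ ∧
      (∑ i, |βhat i - βstar i|) ≤ 32 * lam * s / κ := by
  have hsupp : ∀ i ∉ S, βstar i = 0 := fun i hi => not_not.1 (mt (hS i).2 hi)
  have hquad := lasso_quadForm_le_cone hsym hlam.le hdev hsupp (hmin βstar)
  have hnonneg : 0 ≤ (βhat - βstar) ⬝ᵥ Γhat *ᵥ (βhat - βstar) := by
    simpa using hpsd.dotProduct_mulVec_nonneg (βhat - βstar)
  have hcone : ∑ i ∈ Sᶜ, |βhat i - βstar i| ≤ 3 * ∑ i ∈ S, |βhat i - βstar i| := by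
    linarith [(mul_nonneg_iff_of_pos_left (half_pos hlam)).1 (hnonneg.trans hquad)]
  have hcurv := hRE (βhat - βstar) hcone
  have hCS := sum_abs_le_sqrt_card_mul_sqrt_sum_sq S (βhat - βstar)
  simp only [Pi.sub_apply, hs] at hcurv hCS
  have hoff : 0 ≤ ∑ i ∈ Sᶜ, |βhat i - βstar i| := sum_nonneg fun i _ => abs_nonneg _
  have hl2 : √(∑ i, (βhat i - βstar i) ^ 2) ≤ 3 * lam / 2 * √s / κ := by
    refine Real.sqrt_le_div_of_mul_le_mul_sqrt hκ (by positivity) (by positivity) ?_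
    nlinarith
  constructor
  · exact hl2.trans (by gcongr; linarith)
  · calc ∑ i, |βhat i - βstar i|
        = ∑ i ∈ S, |βhat i - βstar i| + ∑ i ∈ Sᶜ, |βhat i - βstar i| :=
          (sum_add_sum_compl S _).symm
      _ ≤ 4 * (√s * √(∑ i, (βhat i - βstar i) ^ 2)) := by linarith
      _ ≤ 4 * (√s * (3 * lam / 2 * √s / κ)) := by gcongr
      _ = 6 * lam * (√s * √s) / κ := by ring
      _ ≤ 32 * lam * s / κ := by rw [Real.mul_self_sqrt (Nat.cast_nonneg _)]; gcongr; norm_num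
end

section
/- Let Ê, E ∈ ℝ^{p×r} each have orthonormal columns. Then for every i ∈ {1,…,p}, the Euclidean norm of the i-th row of Ê Êᵀ − E Eᵀ satisfies |φ_iᵀ(Ê Êᵀ − E Eᵀ)|₂ ≤ |φ_iᵀ(Ê − E O)|₂ + |φ_iᵀ E O|₂ · ‖Ê − E O‖₂ for any orthogonal r×r matrix O; in particular it is at most max row norm of Ê − E O plus (max row norm of E)·‖Ê − E O‖₂. -/
/-!
Since `(EO)(EO)ᵀ = E Eᵀ`, the `i`-th row of `Ê Êᵀ − E Eᵀ = (Ê − EO)Êᵀ + EO(Ê − EO)ᵀ` is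
`Ê (Ê − EO)ᵢ + (Ê − EO)(EO)ᵢ`. The isometry `Ê` preserves the norm of the first term, and the
second has norm at most `s ‖(EO)ᵢ‖`.
-/

open Matrix

section EuclideanNorm

variable {ι : Type*} [Fintype ι]

lemma sqrt_sum_sq_eq_norm (x : ι → ℝ) :
    √(∑ i, x i ^ 2) = ‖WithLp.toLp 2 x‖ := by
  simp [EuclideanSpace.norm_eq]

lemma sqrt_sum_sq_add_le (u v : ι → ℝ) :
    √(∑ i, (u i + v i) ^ 2) ≤ √(∑ i, u i ^ 2) + √(∑ i, v i ^ 2) := by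
  rw [sqrt_sum_sq_eq_norm u, sqrt_sum_sq_eq_norm v]
  exact (sqrt_sum_sq_eq_norm (u + v)).trans_le (norm_add_le _ _)

end EuclideanNorm

namespace Matrix

variable {l m n R : Type*} [Fintype n]

lemma mul_transpose_apply [CommSemiring R] (A : Matrix l n R) (B : Matrix m n R) (i : l) (k : m) :
    (A * Bᵀ) i k = (B *ᵥ A i) k := by
  simp [mul_apply', mulVec, dotProduct_comm]

variable [DecidableEq n]

lemma sum_sq_mulVec_of_transpose_mul_self_eq_one [Fintype m] [CommSemiring R]
    {A : Matrix m n R} (hA : Aᵀ * A = 1) (w : n → R) :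
    ∑ k, (A *ᵥ w) k ^ 2 = ∑ j, w j ^ 2 := by
  simp only [sq]
  change A *ᵥ w ⬝ᵥ A *ᵥ w = w ⬝ᵥ w
  rw [dotProduct_mulVec, ← mulVec_transpose, mulVec_mulVec, hA, one_mulVec]

lemma mul_transpose_sub_mul_transpose_eq [CommRing R]
    (Ehat E : Matrix m n R) {O : Matrix n n R} (hO : O * Oᵀ = 1) :
    Ehat * Ehatᵀ - E * Eᵀ = (Ehat - E * O) * Ehatᵀ + E * O * (Ehat - E * O)ᵀ := by
  have hEO : E * O * (E * O)ᵀ = E * Eᵀ := by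
    rw [transpose_mul, Matrix.mul_assoc, ← Matrix.mul_assoc O, hO, Matrix.one_mul]
  rw [Matrix.sub_mul, transpose_sub, Matrix.mul_sub, hEO]
  abel

end Matrix

theorem projection_row_diff_bound_general {p r : ℕ}
    (Ehat E : Matrix (Fin p) (Fin r) ℝ)
    (hEhat : Ehatᵀ * Ehat = 1)
    (O : Matrix (Fin r) (Fin r) ℝ) (hO : Oᵀ * O = 1)
    (s : ℝ)
    (hs : ∀ v : Fin r → ℝ,
      Real.sqrt (∑ i, ((Ehat - E * O).mulVec v i) ^ 2) ≤
        s * Real.sqrt (∑ j, (v j) ^ 2)) :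
    ∀ i, Real.sqrt (∑ k, ((Ehat * Ehatᵀ - E * Eᵀ) i k) ^ 2) ≤
      Real.sqrt (∑ j, ((Ehat - E * O) i j) ^ 2) +
        Real.sqrt (∑ j, ((E * O) i j) ^ 2) * s := by
  intro i
  set A := Ehat - E * O
  have hrow : ∀ k, (Ehat * Ehatᵀ - E * Eᵀ) i k = (Ehat *ᵥ A i) k + (A *ᵥ (E * O) i) k := by
    intro k
    rw [mul_transpose_sub_mul_transpose_eq Ehat E (mul_eq_one_comm.mp hO), Matrix.add_apply,
      mul_transpose_apply, mul_transpose_apply]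
  calc √(∑ k, ((Ehat * Ehatᵀ - E * Eᵀ) i k) ^ 2)
      ≤ √(∑ k, (Ehat *ᵥ A i) k ^ 2) + √(∑ k, (A *ᵥ (E * O) i) k ^ 2) := by
        simpa only [hrow] using sqrt_sum_sq_add_le _ _
    _ ≤ √(∑ j, A i j ^ 2) + √(∑ j, (E * O) i j ^ 2) * s := by
        rw [sum_sq_mulVec_of_transpose_mul_self_eq_one hEhat, mul_comm _ s]
        exact add_le_add_right (hs _) _

/-- Row-wise bound for the difference of projection matrices:
`|φ_iᵀ(Ê Êᵀ − E Eᵀ)|₂ ≤ |φ_iᵀ(Ê − EO)|₂ + |φ_iᵀ EO|₂ ‖Ê − EO‖₂`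
for any orthogonal `O`, where `s` is an upper bound on `‖Ê − EO‖₂`
stated via the operator characterization. -/
theorem projection_row_diff_bound {p r : ℕ}
    (Ehat E : Matrix (Fin p) (Fin r) ℝ)
    (hEhat : Ehatᵀ * Ehat = 1) (hE : Eᵀ * E = 1)
    (O : Matrix (Fin r) (Fin r) ℝ) (hO : Oᵀ * O = 1)
    (s : ℝ) (hs0 : 0 ≤ s)
    (hs : ∀ v : Fin r → ℝ,
      Real.sqrt (∑ i, ((Ehat - E * O).mulVec v i) ^ 2) ≤
        s * Real.sqrt (∑ j, (v j) ^ 2)) :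
    ∀ i, Real.sqrt (∑ k, ((Ehat * Ehatᵀ - E * Eᵀ) i k) ^ 2) ≤
      Real.sqrt (∑ j, ((Ehat - E * O) i j) ^ 2) +
        Real.sqrt (∑ j, ((E * O) i j) ^ 2) * s :=
  projection_row_diff_bound_general Ehat E hEhat O hO s hs
end

section
/- Suppose Γ̂, Γ are symmetric q×q matrices with |Γ̂ − Γ|_∞ ≤ δ and Λ_min(Γ) ≥ 2κ for some κ > 0. Then for every vector v ∈ ℝ^q satisfying |v|₁ ≤ 4√s |v|₂ with 16 s δ ≤ κ, it holds that vᵀ Γ̂ v ≥ κ |v|₂². -/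
namespace Matrix

variable {m n : Type*} [Fintype m] [Fintype n]

open scoped MatrixOrder in
theorem IsHermitian.mul_dotProduct_self_le_dotProduct_mulVec [DecidableEq n]
    {A : Matrix n n ℝ} (hA : A.IsHermitian) {c : ℝ} (hc : ∀ i, c ≤ hA.eigenvalues i)
    (v : n → ℝ) : c * (v ⬝ᵥ v) ≤ v ⬝ᵥ A *ᵥ v := by
  have hle : algebraMap ℝ (Matrix n n ℝ) c ≤ A := by
    rw [algebraMap_le_iff_le_spectrum (ha := hA.isSelfAdjoint),
      hA.spectrum_real_eq_range_eigenvalues]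
    rintro _ ⟨i, rfl⟩
    exact hc i
  have := (le_iff.mp hle).dotProduct_mulVec_nonneg v
  rwa [star_trivial, sub_mulVec, dotProduct_sub, Algebra.algebraMap_eq_smul_one, smul_mulVec,
    one_mulVec, dotProduct_smul, smul_eq_mul, sub_nonneg] at this

theorem abs_dotProduct_mulVec_le (A : Matrix m n ℝ) {δ : ℝ} (hA : ∀ i j, |A i j| ≤ δ)
    (v : m → ℝ) (w : n → ℝ) :
    |v ⬝ᵥ A *ᵥ w| ≤ δ * (∑ i, |v i|) * ∑ j, |w j| := by
  calc |v ⬝ᵥ A *ᵥ w| = |∑ i, ∑ j, v i * A i j * w j| := by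
        simp only [dotProduct, mulVec, Finset.mul_sum, mul_assoc]
    _ ≤ ∑ i, ∑ j, |v i| * δ * |w j| := by
        refine (Finset.abs_sum_le_sum_abs _ _).trans (Finset.sum_le_sum fun i _ => ?_)
        refine (Finset.abs_sum_le_sum_abs _ _).trans (Finset.sum_le_sum fun j _ => ?_)
        rw [abs_mul, abs_mul]
        gcongr
        exact hA i j
    _ = δ * (∑ i, |v i|) * ∑ j, |w j| := by
        rw [mul_comm δ, Finset.sum_mul, Finset.sum_mul_sum]

theorem IsHermitian.le_dotProduct_mulVec_of_abs_sub_le [DecidableEq n]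
    {A B : Matrix n n ℝ} (hA : A.IsHermitian) {c δ : ℝ} (hc : ∀ i, c ≤ hA.eigenvalues i)
    (hAB : ∀ i j, |B i j - A i j| ≤ δ) (v : n → ℝ) :
    c * ∑ i, v i ^ 2 - δ * (∑ i, |v i|) ^ 2 ≤ v ⬝ᵥ B *ᵥ v := by
  have hspec := hA.mul_dotProduct_self_le_dotProduct_mulVec hc v
  have hpert := abs_dotProduct_mulVec_le (B - A) (fun i j => hAB i j) v v
  rw [sub_mulVec, dotProduct_sub] at hpert
  have hself : v ⬝ᵥ v = ∑ i, v i ^ 2 := by simp only [dotProduct, sq]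
  rw [hself] at hspec
  linarith [neg_abs_le (v ⬝ᵥ B *ᵥ v - v ⬝ᵥ A *ᵥ v)]

end Matrix

theorem restricted_eigenvalue_transfer_general {q : ℕ}
    (Γhat Γ : Matrix (Fin q) (Fin q) ℝ) (hΓ : Γ.IsHermitian)
    (δ κ : ℝ) (hδ : 0 ≤ δ) (s : ℕ)
    (hdiff : ∀ i j, |Γhat i j - Γ i j| ≤ δ)
    (hmin : ∀ i, 2 * κ ≤ hΓ.eigenvalues i)
    (hsparse : 16 * (s : ℝ) * δ ≤ κ) :
    ∀ v : Fin q → ℝ,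
      (∑ i, |v i|) ≤ 4 * Real.sqrt s * Real.sqrt (∑ i, (v i) ^ 2) →
      κ * ∑ i, (v i) ^ 2 ≤ v ⬝ᵥ Γhat.mulVec v := by
  intro v hcone
  have hL2 : 0 ≤ ∑ i, v i ^ 2 := by positivity
  have hcone_sq : (∑ i, |v i|) ^ 2 ≤ 16 * s * ∑ i, v i ^ 2 := by
    calc (∑ i, |v i|) ^ 2 ≤ (4 * Real.sqrt s * Real.sqrt (∑ i, v i ^ 2)) ^ 2 := by
          gcongr
      _ = 16 * s * ∑ i, v i ^ 2 := by
          rw [mul_pow, mul_pow, Real.sq_sqrt s.cast_nonneg, Real.sq_sqrt hL2]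
          ring
  have hRE := hΓ.le_dotProduct_mulVec_of_abs_sub_le hmin hdiff v
  linarith [mul_le_mul_of_nonneg_left hcone_sq hδ, mul_le_mul_of_nonneg_right hsparse hL2]

/-- Restricted eigenvalue condition transfer: if `|Γ̂ − Γ|_∞ ≤ δ`,
`Λ_min(Γ) ≥ 2κ`, and `16 s δ ≤ κ`, then `vᵀ Γ̂ v ≥ κ |v|₂²` for all `v`
satisfying the cone-type inequality `|v|₁ ≤ 4 √s |v|₂`. -/
theorem restricted_eigenvalue_transfer {q : ℕ}
    (Γhat Γ : Matrix (Fin q) (Fin q) ℝ) (hΓhat : Γhat.IsSymm) (hΓ : Γ.IsHermitian)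
    (δ κ : ℝ) (hδ : 0 ≤ δ) (hκ : 0 < κ) (s : ℕ) (hs : 1 ≤ s)
    (hdiff : ∀ i j, |Γhat i j - Γ i j| ≤ δ)
    (hmin : ∀ i, 2 * κ ≤ hΓ.eigenvalues i)
    (hsparse : 16 * (s : ℝ) * δ ≤ κ) :
    ∀ v : Fin q → ℝ,
      (∑ i, |v i|) ≤ 4 * Real.sqrt s * Real.sqrt (∑ i, (v i) ^ 2) →
      κ * ∑ i, (v i) ^ 2 ≤ v ⬝ᵥ Γhat.mulVec v :=
  restricted_eigenvalue_transfer_general Γhat Γ hΓ δ κ hδ s hdiff hmin hsparse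
end

section
/- Let f: [−π, π] → ℂ^{p×p} be the spectral density of a stationary VAR(d) process ξ_t = A₁ξ_{t−1} + ⋯ + A_d ξ_{t−d} + ε_t with Cov(ε_t) = Σ_ε, given by f(ω) = (2π)^{−1} 𝒜(e^{−iω})^{−1} Σ_ε (𝒜(e^{−iω})^{−1})^*, where 𝒜(z) = I − Σ_ℓ A_ℓ z^ℓ has no roots on or inside the unit circle. Then for all ω, (2π)^{−1} Λ_min(Σ_ε)/μ_max(𝒜) ≤ Λ_min(f(ω)) ≤ Λ_max(f(ω)) ≤ (2π)^{−1} Λ_max(Σ_ε)/μ_min(𝒜), where μ_min(𝒜) = min_{|z|=1} Λ_min(𝒜*(z)𝒜(z)) and μ_max(𝒜) = max_{|z|=1} Λ_max(𝒜*(z)𝒜(z)). -/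
open Matrix
open scoped ComplexOrder

/-- The (real part of the) Hermitian quadratic form `v ↦ vᴴ H v`. -/
noncomputable def quadForm {p : ℕ} (H : Matrix (Fin p) (Fin p) ℂ) (v : Fin p → ℂ) : ℝ :=
  (star v ⬝ᵥ H.mulVec v).re

/-!
With `z = e^{-iω}` and `M = 𝒜(z)`, the quadratic form of `f(ω)` at `v` is `(2π)⁻¹` times that of
`Σ_ε` at `w = M⁻ᴴ v`, so it remains to compare `|w|²` with `|v|² = |Mᴴ w|²`. The hypotheses bound
`|M u|²` between `μmin |u|²` and `μmax |u|²`, and Cauchy–Schwarz in the form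
`|T x|² = ⟨T† T x, x⟩ ≤ |T† T x| |x|` transfers both bounds from `M` to `Mᴴ`
(the lower one because `M` is onto).
-/

open scoped InnerProduct

namespace ContinuousLinearMap

variable {𝕜 E F : Type*} [RCLike 𝕜] [NormedAddCommGroup E] [InnerProductSpace 𝕜 E]
  [CompleteSpace E] [NormedAddCommGroup F] [InnerProductSpace 𝕜 F] [CompleteSpace F]

lemma norm_apply_sq_le_norm_adjoint_apply_mul_norm (T : E →L[𝕜] F) (x : E) :
    ‖T x‖ ^ 2 ≤ ‖(T†) (T x)‖ * ‖x‖ := by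
  rw [apply_norm_sq_eq_inner_adjoint_left]
  exact (RCLike.re_le_norm _).trans (norm_inner_le_norm _ _)

lemma norm_adjoint_apply_sq_le {T : E →L[𝕜] F} {C : ℝ} (hC : 0 ≤ C)
    (h : ∀ x, ‖T x‖ ^ 2 ≤ C * ‖x‖ ^ 2) (y : F) : ‖(T†) y‖ ^ 2 ≤ C * ‖y‖ ^ 2 := by
  have hCS := (T†).norm_apply_sq_le_norm_adjoint_apply_mul_norm y
  rw [adjoint_adjoint] at hCS
  rcases (norm_nonneg ((T†) y)).eq_or_lt with h0 | hpos
  · rw [← h0, zero_pow two_ne_zero]; positivity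
  · have h4 : (‖(T†) y‖ ^ 2) ^ 2 ≤ ‖T ((T†) y)‖ ^ 2 * ‖y‖ ^ 2 := by
      rw [← mul_pow]; gcongr
    refine le_of_mul_le_mul_left ?_ (pow_pos hpos 2)
    nlinarith [mul_le_mul_of_nonneg_right (h ((T†) y)) (sq_nonneg ‖y‖)]

lemma mul_norm_apply_sq_le_norm_adjoint_apply_sq {T : E →L[𝕜] F} {c : ℝ} (hc : 0 ≤ c)
    (h : ∀ x, c * ‖x‖ ^ 2 ≤ ‖T x‖ ^ 2) (x : E) : c * ‖T x‖ ^ 2 ≤ ‖(T†) (T x)‖ ^ 2 := by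
  have hCS := T.norm_apply_sq_le_norm_adjoint_apply_mul_norm x
  rcases (norm_nonneg (T x)).eq_or_lt with h0 | hpos
  · rw [← h0]; simp
  · have h4 : (‖T x‖ ^ 2) ^ 2 ≤ ‖(T†) (T x)‖ ^ 2 * ‖x‖ ^ 2 := by
      rw [← mul_pow]; gcongr
    refine le_of_mul_le_mul_left ?_ (pow_pos hpos 2)
    nlinarith [mul_le_mul_of_nonneg_left (h x) (sq_nonneg ‖(T†) (T x)‖)]

end ContinuousLinearMap

lemma sum_norm_sq_eq_norm_toLp_sq {𝕜 n : Type*} [RCLike 𝕜] [Fintype n] (v : n → 𝕜) :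
    ∑ i, ‖v i‖ ^ 2 = ‖WithLp.toLp 2 v‖ ^ 2 :=
  (EuclideanSpace.norm_sq_eq _).symm

namespace Matrix

variable {𝕜 n : Type*} [RCLike 𝕜] [Fintype n] [DecidableEq n]

lemma adjoint_toEuclideanCLM (M : Matrix n n 𝕜) :
    (toEuclideanCLM (𝕜 := 𝕜) M)† = toEuclideanCLM (𝕜 := 𝕜) Mᴴ := by
  rw [← ContinuousLinearMap.star_eq_adjoint, ← map_star, star_eq_conjTranspose]

lemma sum_norm_conjTranspose_mulVec_sq_le {M : Matrix n n 𝕜} {C : ℝ} (hC : 0 ≤ C)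
    (h : ∀ u, ∑ i, ‖(M *ᵥ u) i‖ ^ 2 ≤ C * ∑ i, ‖u i‖ ^ 2) (v : n → 𝕜) :
    ∑ i, ‖(Mᴴ *ᵥ v) i‖ ^ 2 ≤ C * ∑ i, ‖v i‖ ^ 2 := by
  simp only [sum_norm_sq_eq_norm_toLp_sq, ← toEuclideanCLM_toLp] at h ⊢
  rw [← adjoint_toEuclideanCLM]
  exact ContinuousLinearMap.norm_adjoint_apply_sq_le hC (fun x => h (WithLp.ofLp x)) _

lemma mul_sum_norm_sq_le_sum_norm_conjTranspose_mulVec_sq {M : Matrix n n 𝕜}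
    (hM : IsUnit M) {c : ℝ} (hc : 0 ≤ c) (h : ∀ u, c * ∑ i, ‖u i‖ ^ 2 ≤ ∑ i, ‖(M *ᵥ u) i‖ ^ 2)
    (w : n → 𝕜) : c * ∑ i, ‖w i‖ ^ 2 ≤ ∑ i, ‖(Mᴴ *ᵥ w) i‖ ^ 2 := by
  obtain ⟨u, rfl⟩ : ∃ u, M *ᵥ u = w := ⟨M⁻¹ *ᵥ w, by
    rw [mulVec_mulVec, mul_nonsing_inv _ ((isUnit_iff_isUnit_det M).mp hM), one_mulVec]⟩
  simp only [sum_norm_sq_eq_norm_toLp_sq, ← toEuclideanCLM_toLp] at h ⊢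
  rw [← adjoint_toEuclideanCLM]
  exact ContinuousLinearMap.mul_norm_apply_sq_le_norm_adjoint_apply_sq hc
    (fun x => h (WithLp.ofLp x)) _

end Matrix

lemma quadForm_conjTranspose_mul_self {p : ℕ} (M : Matrix (Fin p) (Fin p) ℂ) (v : Fin p → ℂ) :
    quadForm (Mᴴ * M) v = ∑ i, ‖(M *ᵥ v) i‖ ^ 2 := by
  rw [quadForm, ← mulVec_mulVec, dotProduct_mulVec, ← star_mulVec, dotProduct_comm,
    sum_norm_sq_eq_norm_toLp_sq, ← EuclideanSpace.inner_toLp_toLp, inner_self_eq_norm_sq_to_K]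
  norm_cast

lemma quadForm_smul {p : ℕ} (r : ℝ) (H : Matrix (Fin p) (Fin p) ℂ) (v : Fin p → ℂ) :
    quadForm (r • H) v = r * quadForm H v := by
  simp [quadForm, smul_mulVec, dotProduct_smul]

lemma quadForm_mul_mul_conjTranspose {p : ℕ} (B H : Matrix (Fin p) (Fin p) ℂ) (v : Fin p → ℂ) :
    quadForm (B * H * Bᴴ) v = quadForm H (Bᴴ *ᵥ v) := by
  rw [quadForm, quadForm, ← mulVec_mulVec, ← mulVec_mulVec, dotProduct_mulVec, star_mulVec,
    conjTranspose_conjTranspose]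

theorem var_spectral_density_eigenvalue_bounds_general {p : ℕ}
    (Sigε : Matrix (Fin p) (Fin p) ℂ) (hSig : Sigε.PosDef)
    (𝒜 : ℂ → Matrix (Fin p) (Fin p) ℂ)
    (hstable : ∀ z : ℂ, ‖z‖ ≤ 1 → IsUnit (𝒜 z))
    (f : ℝ → Matrix (Fin p) (Fin p) ℂ)
    (hf : ∀ ω : ℝ, f ω = ((2 * Real.pi)⁻¹ : ℝ) •
      ((𝒜 (Complex.exp (-Complex.I * (ω : ℂ))))⁻¹ * Sigε *
        ((𝒜 (Complex.exp (-Complex.I * (ω : ℂ))))⁻¹)ᴴ))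
    (lmin lmax μmin μmax : ℝ) (hμmin : 0 < μmin) (hμmax : 0 < μmax)
    (hlmin : ∀ v : Fin p → ℂ, lmin * (∑ i, ‖v i‖ ^ 2) ≤ quadForm Sigε v)
    (hlmax : ∀ v : Fin p → ℂ, quadForm Sigε v ≤ lmax * (∑ i, ‖v i‖ ^ 2))
    (hμmin' : ∀ z : ℂ, ‖z‖ = 1 →
      ∀ v : Fin p → ℂ, μmin * (∑ i, ‖v i‖ ^ 2) ≤ quadForm ((𝒜 z)ᴴ * 𝒜 z) v)
    (hμmax' : ∀ z : ℂ, ‖z‖ = 1 →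
      ∀ v : Fin p → ℂ, quadForm ((𝒜 z)ᴴ * 𝒜 z) v ≤ μmax * (∑ i, ‖v i‖ ^ 2)) :
    ∀ (ω : ℝ) (v : Fin p → ℂ),
      (2 * Real.pi)⁻¹ * lmin / μmax * (∑ i, ‖v i‖ ^ 2) ≤ quadForm (f ω) v ∧
        quadForm (f ω) v ≤ (2 * Real.pi)⁻¹ * lmax / μmin * (∑ i, ‖v i‖ ^ 2) := by
  intro ω v
  set z := Complex.exp (-Complex.I * ω)
  have hz : ‖z‖ = 1 := by simp [z, Complex.norm_exp]
  set M := 𝒜 z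
  have hM : IsUnit M := hstable z hz.le
  set w := (M⁻¹)ᴴ *ᵥ v
  have hvw : Mᴴ *ᵥ w = v := by
    rw [mulVec_mulVec, ← conjTranspose_mul, nonsing_inv_mul _ ((isUnit_iff_isUnit_det M).mp hM),
      conjTranspose_one, one_mulVec]
  have hfv : quadForm (f ω) v = (2 * Real.pi)⁻¹ * quadForm Sigε w := by
    rw [hf, quadForm_smul, quadForm_mul_mul_conjTranspose]
  have hv_le : ∑ i, ‖v i‖ ^ 2 ≤ μmax * ∑ i, ‖w i‖ ^ 2 := hvw ▸
    sum_norm_conjTranspose_mulVec_sq_le hμmax.le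
      (fun u => quadForm_conjTranspose_mul_self M u ▸ hμmax' z hz u) w
  have hw_le : μmin * ∑ i, ‖w i‖ ^ 2 ≤ ∑ i, ‖v i‖ ^ 2 := hvw ▸
    mul_sum_norm_sq_le_sum_norm_conjTranspose_mulVec_sq hM hμmin.le
      (fun u => quadForm_conjTranspose_mul_self M u ▸ hμmin' z hz u) w
  have hSw : 0 ≤ quadForm Sigε w := hSig.posSemidef.re_dotProduct_nonneg w
  have hlmax_v : 0 ≤ lmax * ∑ i, ‖v i‖ ^ 2 :=
    (hSig.posSemidef.re_dotProduct_nonneg v).trans (hlmax v)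
  have hv0 : 0 ≤ ∑ i, ‖v i‖ ^ 2 := by positivity
  have hw0 : 0 ≤ ∑ i, ‖w i‖ ^ 2 := by positivity
  rw [hfv, mul_div_assoc, mul_div_assoc, mul_assoc, mul_assoc]
  constructor <;> refine mul_le_mul_of_nonneg_left ?_ (by positivity)
  · rw [div_mul_eq_mul_div, div_le_iff₀ hμmax]
    rcases le_total 0 lmin with hl | hl
    · nlinarith [hlmin w, mul_le_mul_of_nonneg_left hv_le hl]
    · nlinarith [hSw, mul_nonpos_of_nonpos_of_nonneg hl hv0]
  · rw [div_mul_eq_mul_div, le_div_iff₀ hμmin]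
    rcases le_total 0 lmax with hl | hl
    · nlinarith [hlmax w, mul_le_mul_of_nonneg_left hw_le hl]
    · nlinarith [hlmax_v, (hlmax w).trans (mul_nonpos_of_nonpos_of_nonneg hl hw0)]

/-- Uniform eigenvalue bounds for the spectral density of a stable VAR(d) process
(Basu & Michailidis, eq. (2.6)): for all frequencies `ω`,
`(2π)⁻¹ Λ_min(Σ_ε)/μ_max(𝒜) ≤ Λ_min(f(ω)) ≤ Λ_max(f(ω)) ≤ (2π)⁻¹ Λ_max(Σ_ε)/μ_min(𝒜)`,
stated via Rayleigh quotients:  `lmin, lmax` bound the quadratic form of `Σ_ε`,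
and `μmin, μmax` bound the quadratic form of `𝒜*(z)𝒜(z)` on the unit circle. -/
theorem var_spectral_density_eigenvalue_bounds {p d : ℕ}
    (A : Fin d → Matrix (Fin p) (Fin p) ℂ)
    (hAreal : ∀ ℓ i j, (A ℓ i j).im = 0)
    (Sigε : Matrix (Fin p) (Fin p) ℂ) (hSig : Sigε.PosDef)
    (𝒜 : ℂ → Matrix (Fin p) (Fin p) ℂ)
    (h𝒜 : ∀ z, 𝒜 z = 1 - ∑ ℓ : Fin d, z ^ ((ℓ : ℕ) + 1) • A ℓ)
    (hstable : ∀ z : ℂ, ‖z‖ ≤ 1 → IsUnit (𝒜 z))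
    (f : ℝ → Matrix (Fin p) (Fin p) ℂ)
    (hf : ∀ ω : ℝ, f ω = ((2 * Real.pi)⁻¹ : ℝ) •
      ((𝒜 (Complex.exp (-Complex.I * (ω : ℂ))))⁻¹ * Sigε *
        ((𝒜 (Complex.exp (-Complex.I * (ω : ℂ))))⁻¹)ᴴ))
    (lmin lmax μmin μmax : ℝ) (hμmin : 0 < μmin) (hμmax : 0 < μmax)
    (hlmin : ∀ v : Fin p → ℂ, lmin * (∑ i, ‖v i‖ ^ 2) ≤ quadForm Sigε v)
    (hlmax : ∀ v : Fin p → ℂ, quadForm Sigε v ≤ lmax * (∑ i, ‖v i‖ ^ 2))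
    (hμmin' : ∀ z : ℂ, ‖z‖ = 1 →
      ∀ v : Fin p → ℂ, μmin * (∑ i, ‖v i‖ ^ 2) ≤ quadForm ((𝒜 z)ᴴ * 𝒜 z) v)
    (hμmax' : ∀ z : ℂ, ‖z‖ = 1 →
      ∀ v : Fin p → ℂ, quadForm ((𝒜 z)ᴴ * 𝒜 z) v ≤ μmax * (∑ i, ‖v i‖ ^ 2)) :
    ∀ (ω : ℝ) (v : Fin p → ℂ),
      (2 * Real.pi)⁻¹ * lmin / μmax * (∑ i, ‖v i‖ ^ 2) ≤ quadForm (f ω) v ∧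
        quadForm (f ω) v ≤ (2 * Real.pi)⁻¹ * lmax / μmin * (∑ i, ‖v i‖ ^ 2) :=
  var_spectral_density_eigenvalue_bounds_general Sigε hSig 𝒜 hstable f hf lmin lmax μmin μmax hμmin
    hμmax hlmin hlmax hμmin' hμmax'
end
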